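/- For a finite group G, |L(G)|^2 · sd(G) = Σ_{H ∈ L(G)} F₂(H), i.e., the number of pairs of commuting subgroups of G equals the sum over all subgroups H of G of the number of factorizations H = AB with A, B ≤ H. -/

import Mathlib

open scoped Pointwise

/-- The subgroup commutativity degree of `G`: the probability that two
randomly chosen subgroups of `G` permute (setwise product). -/
noncomputable def sd (G : Type*) [Group G] : ℚ :=
  (Nat.card {p : Subgroup G × Subgroup G //
      (p.1 : Set G) * (p.2 : Set G) = (p.2 : Set G) * (p.1 : Set G)} : ℚ) /
    (Nat.card (Subgroup G) : ℚ) ^ 2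

/-- The factorization number of `G`: the number of ordered pairs of subgroups
`(H, K)` with `HK = G` (setwise product). -/
noncomputable def F₂ (G : Type*) [Group G] : ℕ :=
  Nat.card {p : Subgroup G × Subgroup G //
      (p.1 : Set G) * (p.2 : Set G) = (Set.univ : Set G)}

/-- The smallest sublattice of the subgroup lattice of `G` containing all
subgroups that permute with every subgroup of `G`. -/
def permCenter (G : Type*) [Group G] : Set (Subgroup G) :=
  latticeClosure {Y : Subgroup G |
    ∀ X : Subgroup G, (X : Set G) * (Y : Set G) = (Y : Set G) * (X : Set G)}

/-- The non-permutability graph of subgroups of `G`, with vertices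
`L(G) \ permCenter G` and edges joining `X, Y` with `XY ≠ YX`. -/
def npGraph (G : Type*) [Group G] : SimpleGraph {X : Subgroup G // X ∉ permCenter G} where
  Adj X Y := (X.1 : Set G) * (Y.1 : Set G) ≠ (Y.1 : Set G) * (X.1 : Set G)
  symm := ⟨fun _ _ h => Ne.symm h⟩
  loopless := ⟨fun _ h => h rfl⟩

/-!
Two subgroups `X, Y` permute exactly when `XY` is a subgroup, and then `XY = X ⊔ Y`.
Sorting the permuting pairs by their join `H` therefore leaves, over each `H`, the pairs with
`XY = H`; since such `X, Y` lie in `H`, these are the factorizations of `H` by its own subgroups.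
-/

namespace Subgroup

abbrev PermutingPairs (G : Type*) [Group G] : Type _ :=
  {p : Subgroup G × Subgroup G // (p.1 : Set G) * (p.2 : Set G) = (p.2 : Set G) * (p.1 : Set G)}

variable {G : Type*} [Group G]

theorem coe_sup_eq_mul_of_mul_comm {H K : Subgroup G} (h : (H : Set G) * K = K * H) :
    ((H ⊔ K : Subgroup G) : Set G) = H * K := by
  have hmul : (H : Set G) * K * (H * K) = H * K :=
    calc (H : Set G) * K * (H * K) = H * (K * H) * K := by simp only [mul_assoc]
      _ = H * K := by rw [← h, ← mul_assoc, coe_mul_coe, mul_assoc, coe_mul_coe]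
  have hinv : ((H : Set G) * K)⁻¹ = H * K := by rw [mul_inv_rev, inv_coe_set, inv_coe_set, h]
  rw [sup_eq_closure_mul]
  refine subset_antisymm (fun x hx => ?_) subset_closure
  induction hx using closure_induction with
  | mem x hx => exact hx
  | one => exact ⟨1, one_mem H, 1, one_mem K, mul_one 1⟩
  | mul x y _ _ hx hy => exact hmul ▸ Set.mul_mem_mul hx hy
  | inv x _ hx => exact hinv ▸ Set.inv_mem_inv.mpr hx

theorem mul_comm_and_sup_eq_iff {H K L : Subgroup G} :
    ((H : Set G) * K = K * H ∧ H ⊔ K = L) ↔ (H : Set G) * K = L := by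
  constructor
  · rintro ⟨hcomm, rfl⟩
    exact (coe_sup_eq_mul_of_mul_comm hcomm).symm
  · intro hL
    have hKH : (K : Set G) * H = L :=
      calc (K : Set G) * H = ((H : Set G) * K)⁻¹ := by rw [mul_inv_rev, inv_coe_set, inv_coe_set]
        _ = L := by rw [hL, inv_coe_set]
    have hcomm := hL.trans hKH.symm
    exact ⟨hcomm, SetLike.coe_injective <| (coe_sup_eq_mul_of_mul_comm hcomm).trans hL⟩

theorem left_le_of_coe_mul_eq {H K L : Subgroup G} (h : (H : Set G) * K = L) : H ≤ L :=
  SetLike.coe_subset_coe.mp (h ▸ Set.subset_mul_left _ (one_mem K))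

theorem right_le_of_coe_mul_eq {H K L : Subgroup G} (h : (H : Set G) * K = L) : K ≤ L :=
  SetLike.coe_subset_coe.mp (h ▸ Set.subset_mul_right _ (one_mem H))

theorem coe_map_subtype_mul_eq_iff {H : Subgroup G} {A B : Subgroup H} :
    ((A.map H.subtype : Set G) * (B.map H.subtype : Set G) = H) ↔
      (A : Set H) * (B : Set H) = Set.univ := by
  rw [coe_map, coe_map, ← Set.image_mul, ← (Set.image_injective.mpr H.subtype_injective).eq_iff,
    Set.image_univ, coe_subtype, Subtype.range_coe_subtype, SetLike.setOfPred_mem_eq]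

def factorizationEquiv (H : Subgroup G) :
    {q : Subgroup H × Subgroup H // (q.1 : Set H) * (q.2 : Set H) = Set.univ} ≃
      {p : Subgroup G × Subgroup G // (p.1 : Set G) * (p.2 : Set G) = H} where
  toFun q := ⟨(q.1.1.map H.subtype, q.1.2.map H.subtype), coe_map_subtype_mul_eq_iff.mpr q.2⟩
  invFun p := ⟨(p.1.1.subgroupOf H, p.1.2.subgroupOf H), by
    have hX := map_subgroupOf_eq_of_le (left_le_of_coe_mul_eq p.2)
    have hY := map_subgroupOf_eq_of_le (right_le_of_coe_mul_eq p.2)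
    rw [← coe_map_subtype_mul_eq_iff, hX, hY]
    exact p.2⟩
  left_inv q := by
    ext1
    exact Prod.ext (comap_map_eq_self_of_injective H.subtype_injective _)
      (comap_map_eq_self_of_injective H.subtype_injective _)
  right_inv p := by
    ext1
    exact Prod.ext (map_subgroupOf_eq_of_le (left_le_of_coe_mul_eq p.2))
      (map_subgroupOf_eq_of_le (right_le_of_coe_mul_eq p.2))

def permutingPairsFiberEquiv (H : Subgroup G) :
    {p : PermutingPairs G // p.1.1 ⊔ p.1.2 = H} ≃
      {p : Subgroup G × Subgroup G // (p.1 : Set G) * (p.2 : Set G) = H} :=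
  (Equiv.subtypeSubtypeEquivSubtypeInter
      (fun p : Subgroup G × Subgroup G => (p.1 : Set G) * (p.2 : Set G) = p.2 * p.1)
      (fun p => p.1 ⊔ p.2 = H)).trans <|
    Equiv.subtypeEquivRight fun _ => mul_comm_and_sup_eq_iff

theorem card_permutingPairs_eq_finsum_F₂ [Finite G] :
    Nat.card (PermutingPairs G) = ∑ᶠ H : Subgroup G, F₂ H := by
  have := Fintype.ofFinite (Subgroup G)
  calc Nat.card (PermutingPairs G)
        = ∑ H : Subgroup G, Nat.card {p : PermutingPairs G // p.1.1 ⊔ p.1.2 = H} := by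
        rw [← Nat.card_sigma, Nat.card_congr (Equiv.sigmaFiberEquiv _)]
    _ = ∑ H : Subgroup G, F₂ H := Finset.sum_congr rfl fun H _ =>
        Nat.card_congr ((permutingPairsFiberEquiv H).trans (factorizationEquiv H).symm)
    _ = ∑ᶠ H : Subgroup G, F₂ H := (finsum_eq_sum_of_fintype _).symm

end Subgroup

theorem stmt2 (G : Type*) [Group G] [Finite G] :
    (Nat.card (Subgroup G) : ℚ) ^ 2 * sd G = ∑ᶠ H : Subgroup G, (F₂ H : ℚ) := by
  have hcard : (Nat.card (Subgroup G) : ℚ) ≠ 0 := Nat.cast_ne_zero.mpr Nat.card_pos.ne'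
  rw [sd, mul_div_cancel₀ _ (pow_ne_zero 2 hcard), Subgroup.card_permutingPairs_eq_finsum_F₂,
    Nat.cast_finsum]
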